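/- Let n = 2m+1 ≥ 3, v = 2(3^{m+1}-1), t = (3^n+1)/4, and consider j ∈ {3^i : 0 ≤ i ≤ n-1} ∪ {(2·3^m+1)3^i mod (3^n-1) : 0 ≤ i ≤ n-1}. Then wt(jvt) + wt(-jv) + wt(j) = 2n + 1, where wt is the ternary digit sum of the residue modulo 3^n - 1. -/

import Mathlib

/-!
Multiplication by `3` modulo `3^n - 1` permutes the `n` ternary digits of a residue cyclically,
so `wt` is invariant under `j ↦ 3^i j` and it suffices to treat `j = 1` and `j = 2·3^m + 1`.
For a nonzero residue `x`, the residue of `-x` is the digitwise complement `3^n - 1 - x`, so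
`wt(-x) = 2n - wt(x)`. Since `4t = 3^n + 1 ≡ 2`, multiplying an even `c` by `2t` gives back `c`;
hence `vt ≡ 3^(m+1) - 1`, while `(2·3^m + 1)v ≡ 2·3^m + 2` and `(2·3^m + 1)vt ≡ 3^m + 1`.
These residues have evident ternary expansions, and the two cases add up to
`2(m+1) + (2n - 2(m+1)) + 1` and `2 + (2n - 4) + 3`.
-/

/-- `wtZ n a` is the ternary digit sum of the residue of the integer `a`
modulo `3^n - 1`, the residue being taken in `[0, 3^n - 2]`. -/
def wtZ (n : ℕ) (a : ℤ) : ℤ :=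
  ((Nat.digits 3 (a % ((3 : ℤ) ^ n - 1)).toNat).sum : ℤ)

def digitSum (b x : ℕ) : ℕ := (Nat.digits b x).sum

section DigitSum

variable {b : ℕ}

@[simp] lemma digitSum_zero : digitSum b 0 = 0 := by simp [digitSum]

lemma digitSum_add_base_mul (hb : 1 < b) {x : ℕ} (hx : x < b) (y : ℕ) :
    digitSum b (x + b * y) = x + digitSum b y := by
  by_cases h : x = 0 ∧ y = 0
  · simp [h.1, h.2]
  · rw [digitSum, Nat.digits_add b hb x y hx (by tauto), List.sum_cons, digitSum]

lemma digitSum_of_lt (hb : 1 < b) {x : ℕ} (hx : x < b) : digitSum b x = x := by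
  simpa using digitSum_add_base_mul hb hx 0

lemma digitSum_add_base_pow_mul (hb : 1 < b) {k r : ℕ} (hr : r < b ^ k) (s : ℕ) :
    digitSum b (r + b ^ k * s) = digitSum b r + digitSum b s := by
  rcases Nat.eq_zero_or_pos s with rfl | hs
  · simp
  obtain ⟨l, rfl⟩ := Nat.exists_eq_add_of_le ((Nat.digits_length_le_iff hb r).2 hr)
  rw [digitSum, ← Nat.digits_append_zeroes_append_digits hb hs]
  simp [digitSum]

lemma digitSum_add_base_pow_mul_of_lt (hb : 1 < b) {k x y : ℕ} (hk : 0 < k) (hx : x < b)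
    (hy : y < b) : digitSum b (x + b ^ k * y) = x + y := by
  have hxk : x < b ^ k := hx.trans_le (le_self_pow₀ hb.le hk.ne')
  rw [digitSum_add_base_pow_mul hb hxk, digitSum_of_lt hb hx, digitSum_of_lt hb hy]

lemma digitSum_base_pow_sub_one_sub_add_digitSum (hb : 1 < b) {k c : ℕ} (hc : c < b ^ k) :
    digitSum b (b ^ k - 1 - c) + digitSum b c = (b - 1) * k := by
  induction k generalizing c with
  | zero => simp_all
  | succ k ih =>
    have hcb : c / b < b ^ k := by
      rwa [Nat.div_lt_iff_lt_mul (by omega), ← pow_succ]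
    have hc0 : c % b < b := Nat.mod_lt _ (by omega)
    have hdigits : digitSum b c = c % b + digitSum b (c / b) := by
      conv_lhs => rw [← Nat.mod_add_div c b]
      exact digitSum_add_base_mul hb hc0 _
    have hsplit : b ^ (k + 1) - 1 - c = (b - 1 - c % b) + b * (b ^ k - 1 - c / b) := by
      have h1 : b * (b ^ k - 1 - c / b) + b * (c / b) + b = b ^ (k + 1) := by
        rw [← mul_add, ← mul_add_one, pow_succ']; congr 1; omega
      have h2 := Nat.mod_add_div c b
      omega
    rw [hsplit, digitSum_add_base_mul hb (by omega), hdigits, mul_add_one]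
    have := ih hcb
    omega

lemma digitSum_base_pow_sub_one (hb : 1 < b) (k : ℕ) : digitSum b (b ^ k - 1) = (b - 1) * k := by
  simpa using digitSum_base_pow_sub_one_sub_add_digitSum hb (c := 0) (k := k) (by positivity)

lemma digitSum_base_mul_mod (hb : 1 < b) {n a : ℕ} (ha : a < b ^ n - 1) :
    digitSum b (b * a % (b ^ n - 1)) = digitSum b a := by
  obtain ⟨n, rfl⟩ : ∃ n', n = n' + 1 := ⟨n - 1, by rcases n with _ | n <;> simp_all⟩
  obtain ⟨q, r, rfl, hr, hq⟩ : ∃ q r, a = r + b ^ n * q ∧ r < b ^ n ∧ q < b := by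
    refine ⟨a / b ^ n, a % b ^ n, (Nat.mod_add_div a _).symm, Nat.mod_lt _ (by positivity), ?_⟩
    rw [Nat.div_lt_iff_lt_mul (by positivity), ← pow_succ']
    omega
  have hpos : 1 ≤ b ^ (n + 1) := Nat.one_le_pow _ _ (by omega)
  -- the leading digit `q` moves to the bottom
  have hrot : b * (r + b ^ n * q) = (q + b * r) + q * (b ^ (n + 1) - 1) := by
    zify [hpos]; ring
  have hlt : q + b * r < b ^ (n + 1) - 1 := by
    rw [pow_succ'] at ha ⊢
    rcases Nat.lt_or_ge (q + 1) b with hq1 | hq1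
    · have := Nat.mul_le_mul_left b (show r + 1 ≤ b ^ n by omega)
      rw [mul_add_one] at this
      omega
    · obtain rfl : q = b - 1 := by omega
      have hB : b ^ n * (b - 1) + b ^ n = b * b ^ n := by
        rw [← mul_add_one, mul_comm]; congr 1; omega
      have := Nat.mul_le_mul_left b (show r + 2 ≤ b ^ n by omega)
      rw [mul_add] at this
      omega
  rw [hrot, Nat.add_mul_mod_self_right, Nat.mod_eq_of_lt hlt, digitSum_add_base_mul hb hq,
    digitSum_add_base_pow_mul hb hr, digitSum_of_lt hb hq, add_comm]

lemma digitSum_base_pow_mul_mod (hb : 1 < b) {n a : ℕ} (ha : a < b ^ n - 1) (i : ℕ) :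
    digitSum b (b ^ i * a % (b ^ n - 1)) = digitSum b a := by
  induction i with
  | zero => rw [pow_zero, one_mul, Nat.mod_eq_of_lt ha]
  | succ i ih =>
    rw [pow_succ', mul_assoc, ← Nat.mul_mod_mod,
      digitSum_base_mul_mod hb (Nat.mod_lt _ (by omega)), ih]

end DigitSum

section Weight

variable {n i x : ℕ} {a : ℤ}

lemma wtZ_of_modEq (hx : x < 3 ^ n - 1) (h : a ≡ 3 ^ i * x [ZMOD 3 ^ n - 1]) :
    wtZ n a = digitSum 3 x := by
  have hN : ((3 ^ n - 1 : ℕ) : ℤ) = 3 ^ n - 1 := by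
    push_cast [Nat.one_le_pow n 3 (by norm_num)]; ring
  have hprod : (3 : ℤ) ^ i * x = ((3 ^ i * x : ℕ) : ℤ) := by push_cast; ring
  rw [wtZ, h, hprod, ← hN, ← Int.natCast_mod, Int.toNat_natCast]
  exact congrArg _ (digitSum_base_pow_mul_mod (by norm_num) hx i)

lemma wtZ_neg_of_modEq (hx0 : 0 < x) (hx : x < 3 ^ n - 1) (h : a ≡ 3 ^ i * x [ZMOD 3 ^ n - 1]) :
    wtZ n (-a) = 2 * n - digitSum 3 x := by
  have hcompl : -a ≡ 3 ^ i * ((3 ^ n - 1 - x : ℕ) : ℤ) [ZMOD 3 ^ n - 1] := by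
    refine h.neg.trans (Int.modEq_iff_dvd.2 ⟨3 ^ i, ?_⟩)
    push_cast [Nat.one_le_pow n 3 (by norm_num), hx.le]
    ring
  have hsum := digitSum_base_pow_sub_one_sub_add_digitSum (b := 3) (by norm_num) (k := n) (c := x) (by omega)
  rw [wtZ_of_modEq (by omega) hcompl]
  omega

end Weight

lemma two_mul_mul_modEq_of_even {N t c : ℤ} (ht : 4 * t = N + 2) (hc : Even c) :
    2 * c * t ≡ c [ZMOD N] := by
  obtain ⟨e, rfl⟩ := hc
  exact Int.modEq_iff_dvd.2 ⟨-e, by linear_combination (-e) * ht⟩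

lemma digitSum_two_mul_three_pow_sub_one {k : ℕ} (hk : 0 < k) :
    digitSum 3 (2 * (3 ^ k - 1)) = 2 * k := by
  obtain ⟨k, rfl⟩ : ∃ k', k = k' + 1 := ⟨k - 1, by omega⟩
  have h1 : 1 ≤ 3 ^ k := Nat.one_le_pow _ _ (by norm_num)
  have hsplit : 2 * (3 ^ (k + 1) - 1) = 1 + 3 * ((3 ^ k - 1) + 3 ^ k * 1) := by
    rw [pow_succ]; omega
  rw [hsplit, digitSum_add_base_mul (by norm_num) (by norm_num),
    digitSum_add_base_pow_mul (by norm_num) (by omega), digitSum_base_pow_sub_one (by norm_num),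
    digitSum_of_lt (by norm_num) (by norm_num)]
  omega

lemma two_mul_three_pow_succ_lt {m : ℕ} (hm : 1 ≤ m) : 2 * 3 ^ (m + 1) < 3 ^ (2 * m + 1) - 1 := by
  have h3 : 3 * 3 ^ (m + 1) ≤ 3 ^ (2 * m + 1) := by
    rw [show 2 * m + 1 = m + (m + 1) by ring, pow_add 3 m (m + 1)]
    exact Nat.mul_le_mul_right _ (le_self_pow₀ (by norm_num : 1 ≤ 3) (by omega : m ≠ 0))
  have h1 : 1 ≤ 3 ^ (m + 1) := Nat.one_le_pow _ _ (by norm_num)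
  omega

section Identity

variable {m n i : ℕ} {v t j : ℤ}

lemma wtZ_sum_of_modEq_three_pow (hm : 1 ≤ m) (hn : n = 2 * m + 1)
    (hv : v = 2 * (3 ^ (m + 1) - 1)) (ht : 4 * t = 3 ^ n - 1 + 2)
    (hj : j ≡ 3 ^ i [ZMOD 3 ^ n - 1]) :
    wtZ n (j * v * t) + wtZ n (-(j * v)) + wtZ n j = 2 * n + 1 := by
  have hlt := two_mul_three_pow_succ_lt hm
  rw [← hn] at hlt
  have h1 : 1 ≤ 3 ^ (m + 1) := Nat.one_le_pow _ _ (by norm_num)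
  have hvt : v * t ≡ 3 ^ (m + 1) - 1 [ZMOD 3 ^ n - 1] := by
    rw [hv]
    exact two_mul_mul_modEq_of_even ht ((Odd.pow (by decide)).sub_odd odd_one)
  rw [wtZ_of_modEq (x := 3 ^ (m + 1) - 1) (i := i) (by omega),
    wtZ_neg_of_modEq (x := 2 * (3 ^ (m + 1) - 1)) (i := i) (by omega) (by omega),
    wtZ_of_modEq (x := 1) (i := i) (by omega), digitSum_base_pow_sub_one (by norm_num),
    digitSum_two_mul_three_pow_sub_one (by omega), digitSum_of_lt (by norm_num) (by norm_num)]
  · push_cast; ring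
  · simpa using hj
  · push_cast [h1]
    simpa [hv] using hj.mul_right v
  · push_cast [h1]
    rw [mul_assoc]
    exact (hj.mul_right _).trans (hvt.mul_left _)

lemma wtZ_sum_of_modEq_three_pow_mul (hm : 1 ≤ m) (hn : n = 2 * m + 1)
    (hv : v = 2 * (3 ^ (m + 1) - 1)) (ht : 4 * t = 3 ^ n - 1 + 2)
    (hj : j ≡ 3 ^ i * (2 * 3 ^ m + 1) [ZMOD 3 ^ n - 1]) :
    wtZ n (j * v * t) + wtZ n (-(j * v)) + wtZ n j = 2 * n + 1 := by
  have hlt := two_mul_three_pow_succ_lt hm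
  rw [← hn, pow_succ] at hlt
  have h1 : 1 ≤ 3 ^ m := Nat.one_le_pow _ _ (by norm_num)
  have hj₀v : (2 * 3 ^ m + 1) * v ≡ 2 * (3 ^ m + 1) [ZMOD 3 ^ n - 1] :=
    Int.modEq_iff_dvd.2 ⟨-4, by rw [hv, hn]; ring⟩
  have hjv : j * v ≡ 3 ^ i * (2 * (3 ^ m + 1)) [ZMOD 3 ^ n - 1] := by
    calc j * v ≡ 3 ^ i * (2 * 3 ^ m + 1) * v [ZMOD 3 ^ n - 1] := hj.mul_right v
      _ = 3 ^ i * ((2 * 3 ^ m + 1) * v) := mul_assoc _ _ _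
      _ ≡ 3 ^ i * (2 * (3 ^ m + 1)) [ZMOD 3 ^ n - 1] := hj₀v.mul_left _
  have hjvt : j * v * t ≡ 3 ^ i * (3 ^ m + 1) [ZMOD 3 ^ n - 1] := by
    refine (hjv.mul_right t).trans ?_
    rw [mul_assoc]
    exact (two_mul_mul_modEq_of_even ht ((Odd.pow (by decide)).add_odd odd_one)).mul_left _
  rw [wtZ_of_modEq (x := 1 + 3 ^ m * 1) (i := i) (by omega),
    wtZ_neg_of_modEq (x := 2 + 3 ^ m * 2) (i := i) (by omega) (by omega),
    wtZ_of_modEq (x := 1 + 3 ^ m * 2) (i := i) (by omega)]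
  · have hdigits {x y : ℕ} (hx : x < 3) (hy : y < 3) : digitSum 3 (x + 3 ^ m * y) = x + y :=
      digitSum_add_base_pow_mul_of_lt (by norm_num) (by omega) hx hy
    rw [hdigits (by norm_num) (by norm_num), hdigits (by norm_num) (by norm_num),
      hdigits (by norm_num) (by norm_num)]
    push_cast; ring
  · convert hj using 2; push_cast; ring
  · convert hjv using 2; push_cast; ring
  · convert hjvt using 2; push_cast; ring

end Identity

theorem stmt_19 (m n : ℕ) (hm : 1 ≤ m) (hn : n = 2 * m + 1)
    (v t : ℤ) (hv : v = 2 * (3 ^ (m + 1) - 1)) (ht : t = ((3 : ℤ) ^ n + 1) / 4)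
    (j : ℤ)
    (hj : ∃ i ≤ n - 1, j = 3 ^ i ∨ j = (2 * 3 ^ m + 1) * 3 ^ i % ((3 : ℤ) ^ n - 1)) :
    wtZ n (j * v * t) + wtZ n (-(j * v)) + wtZ n j = 2 * n + 1 := by
  have h4t : 4 * t = 3 ^ n - 1 + 2 := by
    have h4 : (4 : ℤ) ∣ 3 ^ n + 1 := by simpa using Odd.add_dvd_pow_add_pow (3 : ℤ) 1 ⟨m, hn⟩
    rw [ht, Int.mul_ediv_cancel' h4]
    ring
  obtain ⟨i, -, rfl | rfl⟩ := hj
  · exact wtZ_sum_of_modEq_three_pow hm hn hv h4t (Int.ModEq.refl _)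
  · refine wtZ_sum_of_modEq_three_pow_mul (i := i) hm hn hv h4t ?_
    rw [mul_comm (3 ^ i)]
    exact Int.mod_modEq _ _
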